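/- Let L ⊂ ℂ be a lattice, μ(L) the minimal norm of a nonzero lattice vector, and v a primitive vector with |v| > 2·area(L)/μ(L). Then the vector v' of minimal norm completing v to a positively oriented basis {v, v'} of L is unique. -/

import Mathlib

noncomputable section

open Complex

/-- `{v, v'}` is a positively oriented ℤ-basis of the lattice `L ⊆ ℂ`. -/
def IsOrientedBasis (L : AddSubgroup ℂ) (v v' : ℂ) : Prop :=
  0 < (v' / v).im ∧ AddSubgroup.closure {v, v'} = L

/-- `v` is a primitive vector of `L`: it can be completed to a basis of `L`. -/
def IsPrimitive (L : AddSubgroup ℂ) (v : ℂ) : Prop :=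
  ∃ v', IsOrientedBasis L v v'

/-- `v'` has minimal norm among completions of `v` to a positively oriented basis of `L`. -/
def IsMinCompletion (L : AddSubgroup ℂ) (v v' : ℂ) : Prop :=
  IsOrientedBasis L v v' ∧ ∀ w, IsOrientedBasis L v w → ‖v'‖ ≤ ‖w‖

/-- The (signed) area of the parallelogram spanned by `v, v'`; it is positive
when `{v, v'}` is positively oriented, and equals `|v||v'| sin α`. -/
def pArea (v v' : ℂ) : ℝ := ((starRingEnd ℂ) v * v').im


/-! Two positive completions of `v` span the same lattice, so they have the same area and
differ by an integer multiple of `v`. Two distinct minimal completions `v₁, v₂` have equal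
norms, so `v₁ + v₂` is orthogonal to `v₂ - v₁ ∈ ℤv`, whence
`|v| |v₁ + v₂| = pArea v (v₁ + v₂) = 2 area(L)`. As `v₁ + v₂` is a nonzero lattice vector,
this forces `μ |v| ≤ 2 area(L)`. -/

open scoped InnerProductSpace

lemma pArea_eq_im_div_mul_normSq (x y : ℂ) : pArea x y = (y / x).im * normSq x := by
  rcases eq_or_ne x 0 with rfl | hx
  · simp [pArea]
  · rw [div_eq_mul_inv, inv_def, ← mul_assoc, im_mul_ofReal, mul_assoc,
      inv_mul_cancel₀ (normSq_pos.2 hx).ne', mul_one, pArea, mul_comm]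

lemma pArea_self (x : ℂ) : pArea x x = 0 := by
  simp [pArea, mul_im]; ring

lemma pArea_add_left (x y z : ℂ) : pArea (x + y) z = pArea x z + pArea y z := by
  simp [pArea, add_mul]

lemma pArea_add_right (x y z : ℂ) : pArea x (y + z) = pArea x y + pArea x z := by
  simp [pArea, mul_add]

lemma pArea_smul_left (r : ℝ) (x y : ℂ) : pArea (r • x) y = r * pArea x y := by
  simp [pArea, mul_assoc]

lemma pArea_smul_right (r : ℝ) (x y : ℂ) : pArea x (r • y) = r * pArea x y := by
  simp [pArea, mul_left_comm]

lemma pArea_zsmul_left (m : ℤ) (x y : ℂ) : pArea (m • x) y = m * pArea x y := by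
  rw [← Int.cast_smul_eq_zsmul ℝ, pArea_smul_left]

lemma pArea_zsmul_right (m : ℤ) (x y : ℂ) : pArea x (m • y) = m * pArea x y := by
  rw [← Int.cast_smul_eq_zsmul ℝ, pArea_smul_right]

lemma pArea_comm (x y : ℂ) : pArea y x = - pArea x y := by
  simp [pArea, mul_im]; ring

lemma pArea_zsmul_add_zsmul (a b : ℂ) (m n m' n' : ℤ) :
    pArea (m • a + n • b) (m' • a + n' • b) = (m * n' - n * m' : ℤ) * pArea a b := by
  simp only [pArea_add_left, pArea_add_right, pArea_zsmul_left, pArea_zsmul_right, pArea_self,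
    pArea_comm a b]
  push_cast
  ring

lemma norm_mul_norm_eq_abs_pArea_of_inner_eq_zero {x y : ℂ} (h : ⟪x, y⟫_ℝ = 0) :
    ‖x‖ * ‖y‖ = |pArea x y| := by
  rw [Complex.inner, mul_comm] at h
  rw [pArea, abs_im_eq_norm.2 h, norm_mul, norm_conj]

lemma exists_pArea_eq_int_mul_of_mem_closure {a b c d : ℂ}
    (hc : c ∈ AddSubgroup.closure {a, b}) (hd : d ∈ AddSubgroup.closure {a, b}) :
    ∃ k : ℤ, pArea c d = k * pArea a b := by
  obtain ⟨m, n, rfl⟩ := AddSubgroup.mem_closure_pair.1 hc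
  obtain ⟨m', n', rfl⟩ := AddSubgroup.mem_closure_pair.1 hd
  exact ⟨_, pArea_zsmul_add_zsmul a b m n m' n'⟩

lemma pArea_le_of_mem_closure {a b c d : ℂ}
    (hc : c ∈ AddSubgroup.closure {a, b}) (hd : d ∈ AddSubgroup.closure {a, b})
    (hab : 0 < pArea a b) (hcd : 0 < pArea c d) : pArea a b ≤ pArea c d := by
  obtain ⟨k, hk⟩ := exists_pArea_eq_int_mul_of_mem_closure hc hd
  have hk_pos : (0 : ℝ) < k := pos_of_mul_pos_left (hk ▸ hcd) hab.le
  have hk_one : (1 : ℝ) ≤ k := by exact_mod_cast (Int.cast_pos.1 hk_pos : 0 < k)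
  rw [hk]
  exact le_mul_of_one_le_left hab.le hk_one

namespace IsOrientedBasis

variable {L : AddSubgroup ℂ} {v v' : ℂ}

lemma pArea_pos (h : IsOrientedBasis L v v') : 0 < pArea v v' := by
  have hv : v ≠ 0 := by rintro rfl; simpa using h.1
  rw [pArea_eq_im_div_mul_normSq]
  exact mul_pos h.1 (normSq_pos.2 hv)

lemma left_mem (h : IsOrientedBasis L v v') : v ∈ L :=
  h.2 ▸ AddSubgroup.subset_closure (by simp)

lemma right_mem (h : IsOrientedBasis L v v') : v' ∈ L :=
  h.2 ▸ AddSubgroup.subset_closure (by simp)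

lemma pArea_eq {w w' : ℂ} (h : IsOrientedBasis L v v') (h' : IsOrientedBasis L w w') :
    pArea v v' = pArea w w' :=
  le_antisymm
    (pArea_le_of_mem_closure (h.2 ▸ h'.left_mem) (h.2 ▸ h'.right_mem) h.pArea_pos h'.pArea_pos)
    (pArea_le_of_mem_closure (h'.2 ▸ h.left_mem) (h'.2 ▸ h.right_mem) h'.pArea_pos h.pArea_pos)

lemma exists_sub_eq_zsmul {v'' : ℂ} (h : IsOrientedBasis L v v') (h' : IsOrientedBasis L v v'') :
    ∃ a : ℤ, v'' - v' = a • v := by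
  obtain ⟨a, n, hv''⟩ := AddSubgroup.mem_closure_pair.1 (h.2 ▸ h'.right_mem)
  have hArea : (n : ℝ) * pArea v v' = pArea v v' := by
    simpa only [← hv'', pArea_add_right, pArea_zsmul_right, pArea_self, mul_zero, zero_add]
      using h'.pArea_eq h
  have hn : n = 1 := by
    exact_mod_cast (mul_eq_right₀ h.pArea_pos.ne').1 hArea
  exact ⟨a, by rw [← hv'', hn, one_zsmul, add_sub_cancel_right]⟩

end IsOrientedBasis

lemma IsMinCompletion.norm_mul_norm_add_eq {L : AddSubgroup ℂ} {v v₁ v₂ : ℂ}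
    (h₁ : IsMinCompletion L v v₁) (h₂ : IsMinCompletion L v v₂) (hne : v₁ ≠ v₂) :
    ‖v‖ * ‖v₁ + v₂‖ = 2 * pArea v v₁ := by
  obtain ⟨a, ha⟩ := h₁.1.exists_sub_eq_zsmul h₂.1
  have ha0 : (a : ℝ) ≠ 0 := by
    rintro ha0
    rw [Int.cast_eq_zero.1 ha0, zero_smul, sub_eq_zero] at ha
    exact hne ha.symm
  have horth : ⟪v, v₁ + v₂⟫_ℝ = 0 := by
    have h := (real_inner_add_sub_eq_zero_iff v₂ v₁).2
      (le_antisymm (h₂.2 _ h₁.1) (h₁.2 _ h₂.1))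
    rw [ha, ← Int.cast_smul_eq_zsmul ℝ, inner_smul_right, mul_eq_zero, real_inner_comm,
      add_comm] at h
    exact h.resolve_left ha0
  rw [norm_mul_norm_eq_abs_pArea_of_inner_eq_zero horth, pArea_add_right, h₂.1.pArea_eq h₁.1,
    abs_of_pos (by linarith [h₁.1.pArea_pos])]
  ring

/-- if `|v| > 2·area(L)/μ(L)` then the minimal-norm positive
completion of the primitive vector `v` is unique. -/
theorem min_completion_unique (L : AddSubgroup ℂ) (w w' : ℂ)
    (hL : IsOrientedBasis L w w') (μ : ℝ)
    (hμmin : ∀ u ∈ L, u ≠ 0 → μ ≤ ‖u‖)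
    (hμmem : ∃ u ∈ L, u ≠ 0 ∧ ‖u‖ = μ)
    (v : ℂ) (hv : 2 * pArea w w' / μ < ‖v‖)
    (v₁ v₂ : ℂ) (h1 : IsMinCompletion L v v₁) (h2 : IsMinCompletion L v v₂) :
    v₁ = v₂ := by
  by_contra hne
  obtain ⟨u, -, hu0, rfl⟩ := hμmem
  have hsum := h1.norm_mul_norm_add_eq h2 hne
  have hA : 0 < pArea v v₁ := h1.1.pArea_pos
  have hsum0 : v₁ + v₂ ≠ 0 := by
    rintro h0
    rw [h0, norm_zero, mul_zero] at hsum
    linarith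
  have hμ := hμmin _ (add_mem h1.1.right_mem h2.1.right_mem) hsum0
  rw [div_lt_iff₀ (norm_pos_iff.2 hu0), ← h1.1.pArea_eq hL] at hv
  nlinarith [norm_nonneg v]
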